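/- Let φ : I ↠ I' be a surjection of finite nonempty sets, and for i' ∈ I' let I_{i'} = φ⁻¹(i'). Then the full subcategory Tw(I)_φ ⊆ Tw(I) of objects (I → J → K) for which I → K factors through φ is equivalent to the product category ∏_{i' ∈ I'} Tw(I_{i'}), via sending (I → J → K) to the collection of fiber diagrams (I_{i'} → J_{i'} → K_{i'}). -/

import Mathlib

open CategoryTheory Function Limits

/-- An object of the category `Tw(I)`: a diagram `I ↠ J ↠ K` of surjections of
finite nonempty sets. -/
structure TwObj (I : Type) : Type 1 where
  J : Type
  K : Type
  jFin : Finite J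
  kFin : Finite K
  jNe : Nonempty J
  kNe : Nonempty K
  p : I → J
  q : J → K
  hp : Function.Surjective p
  hq : Function.Surjective q

/-- A morphism in `Tw(I)` from `(I → J₁ → K₁)` to `(I → J₂ → K₂)`: a surjection
`J₁ → J₂` under `I` together with a surjection `K₂ → K₁` such that the composite
`J₁ → J₂ → K₂ → K₁` equals `J₁ → K₁`. -/
structure TwHom {I : Type} (A B : TwObj I) : Type where
  φ : A.J → B.J
  ψ : B.K → A.K
  hφ : Function.Surjective φ
  hψ : Function.Surjective ψ
  hp : ∀ i, φ (A.p i) = B.p i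
  hq : ∀ j, ψ (B.q (φ j)) = A.q j

theorem TwHom.ext' {I : Type} {A B : TwObj I} :
    ∀ {f g : TwHom A B}, f.φ = g.φ → f.ψ = g.ψ → f = g
  | ⟨_, _, _, _, _, _⟩, ⟨_, _, _, _, _, _⟩, rfl, rfl => rfl

instance twCategory (I : Type) : Category (TwObj I) where
  Hom A B := TwHom A B
  id A := ⟨_root_.id, _root_.id, Function.surjective_id, Function.surjective_id,
    fun _ => rfl, fun _ => rfl⟩
  comp := fun f g => ⟨g.φ ∘ f.φ, f.ψ ∘ g.ψ, g.hφ.comp f.hφ, f.hψ.comp g.hψ,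
    fun i => by simp only [Function.comp_apply, f.hp, g.hp],
    fun j => by simp only [Function.comp_apply, g.hq, f.hq]⟩
  id_comp := fun f => TwHom.ext' rfl rfl
  comp_id := fun f => TwHom.ext' rfl rfl
  assoc := fun f g h => TwHom.ext' rfl rfl

/-- The fiber diagram `(I_{i'} → J_{i'} → K_{i'})` of a diagram `(I → J → K)` in
`Tw(I)_φ`, with respect to the (unique) factoring `g : K → I'` of `φ` through `I → K`. -/
def fiberObj {I I' : Type} (φ : I → I') (hφ : Function.Surjective φ) (A : TwObj I)
    (g : A.K → I') (hg : ∀ i, g (A.q (A.p i)) = φ i) (i' : I') :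
    TwObj {i : I // φ i = i'} where
  J := {j : A.J // g (A.q j) = i'}
  K := {k : A.K // g k = i'}
  jFin := by have := A.jFin; exact Subtype.finite
  kFin := by have := A.kFin; exact Subtype.finite
  jNe := by
    obtain ⟨i, hi⟩ := hφ i'
    exact ⟨⟨A.p i, by rw [hg]; exact hi⟩⟩
  kNe := by
    obtain ⟨i, hi⟩ := hφ i'
    exact ⟨⟨A.q (A.p i), by rw [hg]; exact hi⟩⟩
  p := fun i => ⟨A.p i.1, by rw [hg]; exact i.2⟩
  q := fun j => ⟨A.q j.1, j.2⟩
  hp := by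
    rintro ⟨j, hj⟩
    obtain ⟨i, rfl⟩ := A.hp j
    exact ⟨⟨i, (hg i).symm.trans hj⟩, rfl⟩
  hq := by
    rintro ⟨k, hk⟩
    obtain ⟨j, rfl⟩ := A.hq k
    exact ⟨⟨j, hk⟩, rfl⟩

/-! A diagram `I ↠ J ↠ K` in `Tw(I)_φ` determines its factoring `g : K → I'` uniquely, since
`I → K` is surjective, and every morphism of `Tw(I)_φ` commutes with these factorings. Hence
diagrams and morphisms split as disjoint unions over the fibres of `g`: the fibre functor is
faithful, fibrewise morphisms glue to a global one (fullness), and a family of fibre diagrams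
is the fibre family of its disjoint union, a `Σ`-type (essential surjectivity). -/

namespace TwObj

variable {I : Type}

def isoOfEquiv {A B : TwObj I} (e : A.J ≃ B.J) (f : B.K ≃ A.K)
    (hp : ∀ i, e (A.p i) = B.p i) (hq : ∀ j, f (B.q (e j)) = A.q j) : A ≅ B where
  hom := ⟨e, f, e.surjective, f.surjective, hp, hq⟩
  inv := ⟨e.symm, f.symm, e.symm.surjective, f.symm.surjective,
    fun i => by rw [← hp, e.symm_apply_apply],
    fun j => by rw [← hq (e.symm j), e.apply_symm_apply, f.symm_apply_apply]⟩
  hom_inv_id := TwHom.ext' (funext e.symm_apply_apply) (funext f.apply_symm_apply)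
  inv_hom_id := TwHom.ext' (funext e.apply_symm_apply) (funext f.symm_apply_apply)

variable {I' : Type} {φ : I → I'}

theorem factor_unique (A : TwObj I) {g g' : A.K → I'}
    (hg : ∀ i, g (A.q (A.p i)) = φ i) (hg' : ∀ i, g' (A.q (A.p i)) = φ i) : g = g' := by
  funext k
  obtain ⟨j, rfl⟩ := A.hq k
  obtain ⟨i, rfl⟩ := A.hp j
  rw [hg, hg']

end TwObj

section Fibers

variable {I I' : Type} (φ : I → I') (hφ : Function.Surjective φ)

theorem fiberObj_eq (A : TwObj I) {g g' : A.K → I'}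
    (hg : ∀ i, g (A.q (A.p i)) = φ i) (hg' : ∀ i, g' (A.q (A.p i)) = φ i) (i' : I') :
    fiberObj φ hφ A g hg i' = fiberObj φ hφ A g' hg' i' := by
  obtain rfl := A.factor_unique hg hg'
  rfl

abbrev TwOver := ObjectProperty.FullSubcategory
  (fun A : TwObj I => ∃ g : A.K → I', ∀ i, g (A.q (A.p i)) = φ i)

namespace TwOver

variable {φ}

noncomputable def factor (A : TwOver φ) : A.obj.K → I' := A.property.choose

theorem factor_spec (A : TwOver φ) (i : I) : factor A (A.obj.q (A.obj.p i)) = φ i :=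
  A.property.choose_spec i

theorem factor_comp_ψ {A B : TwOver φ} (f : TwHom A.obj B.obj) (k : B.obj.K) :
    factor A (f.ψ k) = factor B k := by
  obtain ⟨j, rfl⟩ := B.obj.hq k
  obtain ⟨i, rfl⟩ := B.obj.hp j
  rw [factor_spec, ← f.hp i, f.hq, factor_spec]

variable (φ)

noncomputable abbrev fiber (A : TwOver φ) (i' : I') : TwObj {i : I // φ i = i'} :=
  fiberObj φ hφ A.obj (factor A) (factor_spec A) i'

variable {φ}

def fiberMap {A B : TwOver φ} (f : TwHom A.obj B.obj) (i' : I') :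
    TwHom (fiber φ hφ A i') (fiber φ hφ B i') where
  φ j := ⟨f.φ j.1, by rw [← factor_comp_ψ f, f.hq]; exact j.2⟩
  ψ k := ⟨f.ψ k.1, (factor_comp_ψ f k.1).trans k.2⟩
  hφ := by
    rintro ⟨j', hj'⟩
    obtain ⟨j, rfl⟩ := f.hφ j'
    exact ⟨⟨j, by rw [← f.hq j, factor_comp_ψ f]; exact hj'⟩, rfl⟩
  hψ := by
    rintro ⟨k, hk⟩
    obtain ⟨k', rfl⟩ := f.hψ k
    exact ⟨⟨k', (factor_comp_ψ f k').symm.trans hk⟩, rfl⟩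
  hp i := Subtype.ext (f.hp i.1)
  hq j := Subtype.ext (f.hq j.1)

variable (φ)

noncomputable def fiberFunctor : TwOver φ ⥤ ∀ i' : I', TwObj {i : I // φ i = i'} where
  obj A := fiber φ hφ A
  map f := fiberMap hφ f.hom
  map_id _ := funext fun _ => TwHom.ext' rfl rfl
  map_comp _ _ := funext fun _ => TwHom.ext' rfl rfl

instance : (fiberFunctor φ hφ).Faithful where
  map_injective {A B f g} h := by
    have onJ (j : A.obj.J) :=
      congrFun (congrArg TwHom.φ (congrFun h (factor A (A.obj.q j)))) ⟨j, rfl⟩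
    have onK (k : B.obj.K) := congrFun (congrArg TwHom.ψ (congrFun h (factor B k))) ⟨k, rfl⟩
    exact ObjectProperty.hom_ext (h := TwHom.ext' (funext fun j => congrArg Subtype.val (onJ j))
      (funext fun k => congrArg Subtype.val (onK k)))

section Glue

variable {φ} {A B : TwOver φ} (t : ∀ i', TwHom (fiber φ hφ A i') (fiber φ hφ B i'))

noncomputable def glueJ (j : A.obj.J) : B.obj.J :=
  ((t (factor A (A.obj.q j))).φ ⟨j, rfl⟩).1

noncomputable def glueK (k : B.obj.K) : A.obj.K :=
  ((t (factor B k)).ψ ⟨k, rfl⟩).1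

theorem glueJ_eq (j : A.obj.J) {i' : I'} (h : factor A (A.obj.q j) = i') :
    glueJ hφ t j = ((t i').φ ⟨j, h⟩).1 := by
  subst h; rfl

theorem glueK_eq (k : B.obj.K) {i' : I'} (h : factor B k = i') :
    glueK hφ t k = ((t i').ψ ⟨k, h⟩).1 := by
  subst h; rfl

noncomputable def glue : TwHom A.obj B.obj where
  φ := glueJ hφ t
  ψ := glueK hφ t
  hφ j' := by
    obtain ⟨⟨j, hj⟩, he⟩ := (t (factor B (B.obj.q j'))).hφ ⟨j', rfl⟩
    exact ⟨j, (glueJ_eq hφ t j hj).trans (congrArg Subtype.val he)⟩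
  hψ k := by
    obtain ⟨⟨k', hk'⟩, he⟩ := (t (factor A k)).hψ ⟨k, rfl⟩
    exact ⟨k', (glueK_eq hφ t k' hk').trans (congrArg Subtype.val he)⟩
  hp i := (glueJ_eq hφ t (A.obj.p i) (factor_spec A i)).trans
    (congrArg Subtype.val ((t (φ i)).hp ⟨i, rfl⟩))
  hq j := by
    have hj : factor B (B.obj.q (glueJ hφ t j)) = factor A (A.obj.q j) :=
      ((t (factor A (A.obj.q j))).φ ⟨j, rfl⟩).2
    exact (glueK_eq hφ t _ hj).trans
      (congrArg Subtype.val ((t (factor A (A.obj.q j))).hq ⟨j, rfl⟩))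

theorem fiberMap_glue (i' : I') : fiberMap hφ (glue hφ t) i' = t i' :=
  TwHom.ext' (funext fun j => Subtype.ext (glueJ_eq hφ t j.1 j.2))
    (funext fun k => Subtype.ext (glueK_eq hφ t k.1 k.2))

end Glue

instance : (fiberFunctor φ hφ).Full where
  map_surjective t := ⟨ObjectProperty.homMk (glue hφ t), funext (fiberMap_glue hφ t)⟩

section Sigma

variable [Finite I'] [Nonempty I'] (X : ∀ i' : I', TwObj {i : I // φ i = i'})

def sigmaObj : TwObj I where
  J := Σ i', (X i').J
  K := Σ i', (X i').K
  jFin := by have := fun i' => (X i').jFin; infer_instance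
  kFin := by have := fun i' => (X i').kFin; infer_instance
  jNe := (X (Classical.arbitrary I')).jNe.map (Sigma.mk _)
  kNe := (X (Classical.arbitrary I')).kNe.map (Sigma.mk _)
  p i := ⟨φ i, (X (φ i)).p ⟨i, rfl⟩⟩
  q j := ⟨j.1, (X j.1).q j.2⟩
  hp := by
    rintro ⟨i', j⟩
    obtain ⟨⟨i, rfl⟩, rfl⟩ := (X i').hp j
    exact ⟨i, rfl⟩
  hq := by
    rintro ⟨i', k⟩
    obtain ⟨j, rfl⟩ := (X i').hq k
    exact ⟨⟨i', j⟩, rfl⟩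

def sigma : TwOver φ := ⟨sigmaObj φ X, Sigma.fst, fun _ => rfl⟩

def fiberSigmaIso (i' : I') :
    fiberObj φ hφ (sigmaObj φ X) Sigma.fst (fun _ => rfl) i' ≅ X i' :=
  TwObj.isoOfEquiv (Equiv.sigmaSubtype i') (Equiv.sigmaSubtype (β := fun i' => (X i').K) i').symm
    (by rintro ⟨i, rfl⟩; rfl) (by rintro ⟨⟨_, j⟩, rfl⟩; rfl)

end Sigma

instance [Finite I'] [Nonempty I'] : (fiberFunctor φ hφ).EssSurj where
  mem_essImage X := ⟨sigma φ X, ⟨Pi.isoMk fun i' =>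
    eqToIso (fiberObj_eq φ hφ _ (factor_spec _) (fun _ => rfl) i') ≪≫ fiberSigmaIso φ hφ X i'⟩⟩

end TwOver

end Fibers

theorem stmt4 (I I' : Type) [Finite I'] [Nonempty I']
    (φ : I → I') (hφ : Function.Surjective φ) :
    ∃ F : ObjectProperty.FullSubcategory (fun A : TwObj I => ∃ g : A.K → I', ∀ i, g (A.q (A.p i)) = φ i)
        ⥤ (∀ i' : I', TwObj {i : I // φ i = i'}),
      F.IsEquivalence ∧
      ∀ (A : ObjectProperty.FullSubcategory
          (fun A : TwObj I => ∃ g : A.K → I', ∀ i, g (A.q (A.p i)) = φ i))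
        (g : A.obj.K → I') (hg : ∀ i, g (A.obj.q (A.obj.p i)) = φ i) (i' : I'),
        F.obj A i' = fiberObj φ hφ A.obj g hg i' := by
  exact ⟨TwOver.fiberFunctor φ hφ, { },
    fun A _ hg i' => fiberObj_eq φ hφ A.obj (TwOver.factor_spec A) hg i'⟩
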